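/- Let A be a Banach algebra with a bounded approximate identity and σ : A → A a continuous algebra homomorphism. If A is σ-biflat, then A has a σ-virtual diagonal. -/

import Mathlib

/-!
Let `ρ` witness σ-biflatness and let `(e_i)` be the bounded approximate identity. The functionals
`λ ↦ ρ(λ)(e_i)` on `(A ⊗̂ A)*` form a bounded net in `(A ⊗̂ A)**`, so by Banach–Alaoglu they have a
weak* limit `M` along an ultrafilter refining `atTop`. The module properties of `ρ` turn
`M(λ·σ(a))` and `M(σ(a)·λ)` into limits of `ρ(λ)(a e_i)` and `ρ(λ)(e_i a)`, both equal to `ρ(λ)(a)`;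
`ρ ∘ π* = σ*` and multiplicativity of `σ` turn the second condition into
`lim μ(σ(e_i a)) = μ(σ(a))`.
-/

universe u

open Filter Topology

theorem StrongDual.exists_forall_tendsto_of_norm_le {𝕜 X ι : Type*} [NontriviallyNormedField 𝕜]
    [ProperSpace 𝕜] [SeminormedAddCommGroup X] [NormedSpace 𝕜 X] (φ : ι → StrongDual 𝕜 X)
    {C : ℝ} (hφ : ∀ i, ‖φ i‖ ≤ C) (U : Ultrafilter ι) :
    ∃ Φ : StrongDual 𝕜 X, ∀ x, Tendsto (fun i ↦ φ i x) U (𝓝 (Φ x)) := by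
  obtain ⟨Φ, -, hΦ⟩ := (WeakDual.isCompact_closedBall (0 : StrongDual 𝕜 X) C).ultrafilter_le_nhds
    (U.map (StrongDual.toWeakDual ∘ φ)) <| by
      rw [Ultrafilter.coe_map, le_principal_iff, mem_map]
      exact Eventually.of_forall fun i ↦ by simpa using hφ i
  exact ⟨WeakDual.toStrongDual Φ, tendsto_iff_forall_eval_tendsto_topDualPairing.1 hΦ⟩

theorem sigma_biflat_implies_sigma_virtual_diagonal
    -- A is a Banach algebra
    (A : Type u) [NonUnitalNormedRing A] [NormedSpace ℂ A]
    [IsScalarTower ℂ A A] [SMulCommClass ℂ A A]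
    -- σ is a continuous algebra homomorphism on A
    (σ : A →L[ℂ] A) (hσ : ∀ a b : A, σ (a * b) = σ a * σ b)
    -- A has a bounded approximate identity (a bounded net)
    (ι : Type u) [Preorder ι] [IsDirected ι (· ≤ ·)] [Nonempty ι]
    (e : ι → A) (Cb : ℝ) (hCb : ∀ i, ‖e i‖ ≤ Cb)
    (hbai : ∀ a : A, Tendsto (fun i => e i * a) atTop (nhds a) ∧
                     Tendsto (fun i => a * e i) atTop (nhds a))
    -- E is the projective tensor product A ⊗̂ A
    (E : Type u) [NormedAddCommGroup E] [NormedSpace ℂ E]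
    -- the A-bimodule actions on E
    (l r : A →L[ℂ] E →L[ℂ] E)
    -- the diagonal map π
    (pr : E →L[ℂ] A)
    -- A is σ-biflat
    (hsbiflat : ∃ ρ : (E →L[ℂ] ℂ) →L[ℂ] (A →L[ℂ] ℂ),
      (∀ (a : A) (lam : E →L[ℂ] ℂ) (b : A),
        ρ (lam.comp (r (σ a))) b = ρ lam (b * a)) ∧
      (∀ (a : A) (lam : E →L[ℂ] ℂ) (b : A),
        ρ (lam.comp (l (σ a))) b = ρ lam (a * b)) ∧
      (∀ mu : A →L[ℂ] ℂ, ρ (mu.comp pr) = mu.comp σ)) :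
    -- Then A has a σ-virtual diagonal M ∈ E**
    ∃ M : (E →L[ℂ] ℂ) →L[ℂ] ℂ,
      (∀ (a : A) (lam : E →L[ℂ] ℂ),
        M (lam.comp (l (σ a))) = M (lam.comp (r (σ a)))) ∧
      (∀ (a : A) (mu : A →L[ℂ] ℂ),
        M ((mu.comp ((ContinuousLinearMap.mul ℂ A).flip (σ a))).comp pr)
          = mu (σ a)) := by
  obtain ⟨ρ, hρr, hρl, hρπ⟩ := hsbiflat
  have hU : (Ultrafilter.of (atTop : Filter ι) : Filter ι) ≤ atTop := Ultrafilter.of_le _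
  obtain ⟨M, hM⟩ := StrongDual.exists_forall_tendsto_of_norm_le (fun i ↦ ρ.flip (e i))
    (fun i ↦ ρ.opNorm_flip ▸ ρ.flip.le_opNorm_of_le (hCb i)) (Ultrafilter.of atTop)
  have hM_eq : ∀ lam y, Tendsto (fun i ↦ ρ lam (e i)) atTop (𝓝 y) → M lam = y :=
    fun lam y h ↦ tendsto_nhds_unique (hM lam) (h.mono_left hU)
  refine ⟨M, fun a lam ↦ ?_, fun a mu ↦ hM_eq _ _ ?_⟩
  · rw [hM_eq _ (ρ lam a), hM_eq _ (ρ lam a)]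
    · simpa only [hρr, Function.comp_def] using ((ρ lam).continuous.tendsto a).comp (hbai a).1
    · simpa only [hρl, Function.comp_def] using ((ρ lam).continuous.tendsto a).comp (hbai a).2
  · have hρ_apply : ∀ i, ρ ((mu.comp ((ContinuousLinearMap.mul ℂ A).flip (σ a))).comp pr) (e i)
        = mu (σ (e i * a)) := by
      simp [hρπ, hσ]
    simpa only [hρ_apply, Function.comp_def] using
      (mu.continuous.tendsto _).comp ((σ.continuous.tendsto a).comp (hbai a).1)
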